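/- arXiv:1705.06533 — 2 statements merged into one kernel-verified Lean document; each statement's English description precedes it below -/
import Mathlib

section
/- Let μ ∈ ℝ^k, let Σ be a symmetric positive definite k×k real matrix, let 𝟏 ∈ ℝ^k be the all-ones vector, and let A > 0, c > 0, W > 0, R ∈ ℝ, r ∈ ℝ. Then the function v ↦ ∫ −A·exp( −cW ( R + ⟨v, x − r·𝟏⟩ ) ) dN_k(μ,Σ)(x) on ℝ^k attains its supremum, the supremum is attained uniquely at v* = (cW)^{−1} Σ^{−1} (μ − r·𝟏), and the maximal value equals −A·exp( −cWR − (1/2)(μ − r·𝟏)ᵀ Σ^{−1} (μ − r·𝟏) ). -/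
/-!
Completing the square in the exponent of the Gaussian density gives the moment generating
function `∫ exp ⟨t, x⟩ dN(μ, Σ) = exp (⟨t, μ⟩ + ⟨t, Σ t⟩ / 2)`; the normalisation of the density
follows by writing `Σ = Bᵀ B` and substituting `x = μ + Bᵀ y`, which splits the integral into `k`
one-dimensional Gaussian integrals. With `t = -cW v` and `m = μ - r 𝟏`, a second completion of the
square writes the expected utility as `-A exp (-cWR - ⟨m, Σ⁻¹ m⟩ / 2 + ⟨w, Σ w⟩ / 2)` with
`w = cW v - Σ⁻¹ m`. As `Σ` is positive definite, `⟨w, Σ w⟩ > 0` unless `w = 0`, that is `v = v*`.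
-/

open MeasureTheory Matrix Real

/-- The `k`-dimensional Gaussian probability measure `N_k(μ, S)` on `ℝ^k`, defined via its
Lebesgue density `((2π)^k det S)^{-1/2} exp(-(x-μ)ᵀ S⁻¹ (x-μ)/2)`. -/
noncomputable def multivariateGaussian {k : ℕ} (μ : Fin k → ℝ)
    (S : Matrix (Fin k) (Fin k) ℝ) : Measure (Fin k → ℝ) :=
  volume.withDensity fun x =>
    ENNReal.ofReal
      (Real.exp (-((x - μ) ⬝ᵥ (S⁻¹ *ᵥ (x - μ))) / 2) / Real.sqrt ((2 * π) ^ k * S.det))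

namespace Matrix
variable {n R : Type*} [Fintype n] [DecidableEq n] [CommRing R]

theorem IsSymm.dotProduct_mulVec_complete_square {M : Matrix n n R} (hM : M.IsSymm)
    (hdet : IsUnit M.det) (u b : n → R) :
    u ⬝ᵥ (M *ᵥ u) - 2 * (b ⬝ᵥ u) =
      (u - M⁻¹ *ᵥ b) ⬝ᵥ (M *ᵥ (u - M⁻¹ *ᵥ b)) - b ⬝ᵥ (M⁻¹ *ᵥ b) := by
  have hMw : M *ᵥ (M⁻¹ *ᵥ b) = b := by rw [mulVec_mulVec, mul_nonsing_inv _ hdet, one_mulVec]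
  have hwM : (M⁻¹ *ᵥ b) ᵥ* M = b := by rw [← mulVec_transpose, hM.eq, hMw]
  rw [mulVec_sub, sub_dotProduct, dotProduct_sub, dotProduct_sub, hMw,
    dotProduct_mulVec (M⁻¹ *ᵥ b), hwM, dotProduct_comm u b, dotProduct_comm (M⁻¹ *ᵥ b) b]
  ring

theorem dotProduct_transpose_mulVec_inv_transpose_mul_self {B : Matrix n n R}
    (hB : IsUnit B.det) (y : n → R) :
    (Bᵀ *ᵥ y) ⬝ᵥ ((Bᵀ * B)⁻¹ *ᵥ (Bᵀ *ᵥ y)) = y ⬝ᵥ y := by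
  have hBt : IsUnit Bᵀ.det := by rwa [det_transpose]
  rw [Matrix.mul_inv_rev, ← mulVec_mulVec, mulVec_mulVec (M := Bᵀ⁻¹), nonsing_inv_mul _ hBt,
    one_mulVec, mulVec_transpose, ← dotProduct_mulVec, mulVec_mulVec, mul_nonsing_inv _ hB,
    one_mulVec]

end Matrix

theorem integral_exp_neg_dotProduct_self_div_two (ι : Type*) [Fintype ι] :
    ∫ y : ι → ℝ, exp (-(y ⬝ᵥ y) / 2) = √(2 * π) ^ Fintype.card ι := by
  have hprod : ∀ y : ι → ℝ, exp (-(y ⬝ᵥ y) / 2) = ∏ i, exp (-(1 / 2) * y i ^ 2) := by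
    intro y
    rw [← exp_sum, dotProduct, ← Finset.sum_neg_distrib, Finset.sum_div]
    congr 1
    exact Finset.sum_congr rfl fun i _ => by ring
  simp_rw [hprod]
  rw [integral_fintype_prod_volume_eq_pow (fun x => exp (-(1 / 2) * x ^ 2)), integral_gaussian]
  norm_num [div_div_eq_mul_div, mul_comm]

theorem integral_comp_mulVec {ι E : Type*} [Fintype ι] [DecidableEq ι] [NormedAddCommGroup E]
    [NormedSpace ℝ E] {B : Matrix ι ι ℝ} (hB : B.det ≠ 0) (F : (ι → ℝ) → E) :
    ∫ y, F (B *ᵥ y) = |B.det|⁻¹ • ∫ x, F x := by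
  have hinj : Function.Injective (toLin' B) :=
    mulVec_injective_iff_isUnit.2 ((isUnit_iff_isUnit_det B).2 (isUnit_iff_ne_zero.2 hB))
  have hemb : MeasurableEmbedding (toLin' B) :=
    (LinearMap.isClosedEmbedding_of_injective (LinearMap.ker_eq_bot.2 hinj)).measurableEmbedding
  rw [← funext fun y => congrArg F (toLin'_apply B y), ← hemb.integral_map,
    Real.map_matrix_volume_pi_eq_smul_volume_pi hB, integral_smul_measure,
    ENNReal.toReal_ofReal (abs_nonneg _), abs_inv]

section Gaussian

variable {k : ℕ}

noncomputable def gaussianDensity (μ : Fin k → ℝ) (S : Matrix (Fin k) (Fin k) ℝ)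
    (x : Fin k → ℝ) : ℝ :=
  exp (-((x - μ) ⬝ᵥ (S⁻¹ *ᵥ (x - μ))) / 2) / √((2 * π) ^ k * S.det)

theorem continuous_gaussianDensity (μ : Fin k → ℝ) (S : Matrix (Fin k) (Fin k) ℝ) :
    Continuous (gaussianDensity μ S) := by
  unfold gaussianDensity
  fun_prop

theorem multivariateGaussian_eq_withDensity (μ : Fin k → ℝ) (S : Matrix (Fin k) (Fin k) ℝ) :
    multivariateGaussian μ S = volume.withDensity fun x => .ofReal (gaussianDensity μ S x) :=
  rfl

theorem integral_multivariateGaussian {E : Type*} [NormedAddCommGroup E] [NormedSpace ℝ E]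
    (μ : Fin k → ℝ) (S : Matrix (Fin k) (Fin k) ℝ) (g : (Fin k → ℝ) → E) :
    ∫ x, g x ∂multivariateGaussian μ S = ∫ x, gaussianDensity μ S x • g x := by
  rw [multivariateGaussian_eq_withDensity, integral_withDensity_eq_integral_toReal_smul
    (continuous_gaussianDensity μ S).measurable.ennreal_ofReal
    (.of_forall fun _ => ENNReal.ofReal_lt_top)]
  congr with x
  rw [ENNReal.toReal_ofReal (by unfold gaussianDensity; positivity)]

open scoped MatrixOrder in
theorem integral_exp_neg_dotProduct_inv_mulVec_div_two {S : Matrix (Fin k) (Fin k) ℝ}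
    (hS : S.PosDef) (μ : Fin k → ℝ) :
    ∫ x, exp (-((x - μ) ⬝ᵥ (S⁻¹ *ᵥ (x - μ))) / 2) = √((2 * π) ^ k * S.det) := by
  obtain ⟨B, rfl⟩ : ∃ B : Matrix (Fin k) (Fin k) ℝ, S = Bᵀ * B :=
    CStarAlgebra.nonneg_iff_eq_star_mul_self.mp hS.posSemidef.nonneg
  have hB : B.det ≠ 0 := by
    intro h
    simpa [h] using hS.det_pos
  rw [integral_sub_right_eq_self (fun x => exp (-(x ⬝ᵥ ((Bᵀ * B)⁻¹ *ᵥ x)) / 2)) μ]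
  have hsqrt : (2 * π) ^ k * (Bᵀ * B).det = (√(2 * π) ^ k * |B.det|) ^ 2 := by
    rw [mul_pow (√(2 * π) ^ k), ← pow_mul, mul_comm k 2, pow_mul, sq_sqrt (by positivity),
      sq_abs, det_mul, det_transpose, sq]
  have hchange := integral_comp_mulVec (B := Bᵀ) (by rwa [det_transpose])
    fun x => exp (-(x ⬝ᵥ ((Bᵀ * B)⁻¹ *ᵥ x)) / 2)
  simp only [dotProduct_transpose_mulVec_inv_transpose_mul_self (isUnit_iff_ne_zero.2 hB),
    integral_exp_neg_dotProduct_self_div_two, Fintype.card_fin, det_transpose,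
    smul_eq_mul] at hchange
  rw [hsqrt, sqrt_sq (by positivity), hchange]
  field_simp

theorem integral_gaussianDensity {S : Matrix (Fin k) (Fin k) ℝ} (hS : S.PosDef)
    (μ : Fin k → ℝ) : ∫ x, gaussianDensity μ S x = 1 := by
  simp_rw [gaussianDensity]
  rw [integral_div, integral_exp_neg_dotProduct_inv_mulVec_div_two hS, div_self]
  exact (sqrt_pos.2 (by have := hS.det_pos; positivity)).ne'

theorem gaussianDensity_mul_exp_dotProduct {S : Matrix (Fin k) (Fin k) ℝ} (hS : S.PosDef)
    (μ t x : Fin k → ℝ) :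
    gaussianDensity μ S x * exp (t ⬝ᵥ x) =
      exp (t ⬝ᵥ μ + t ⬝ᵥ (S *ᵥ t) / 2) * gaussianDensity (μ + S *ᵥ t) S x := by
  have hdet : IsUnit S.det := isUnit_iff_ne_zero.2 hS.det_pos.ne'
  have hsq := (isHermitian_iff_isSymm.1 hS.inv.isHermitian).dotProduct_mulVec_complete_square
    (isUnit_nonsing_inv_det S hdet) (x - μ) t
  rw [nonsing_inv_nonsing_inv S hdet] at hsq
  have hx : t ⬝ᵥ x = t ⬝ᵥ (x - μ) + t ⬝ᵥ μ := by rw [dotProduct_sub]; ring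
  rw [gaussianDensity, gaussianDensity, sub_add_eq_sub_sub, div_mul_eq_mul_div, mul_div_assoc',
    ← exp_add, ← exp_add]
  congr 2
  linarith

theorem integral_exp_dotProduct_multivariateGaussian {S : Matrix (Fin k) (Fin k) ℝ}
    (hS : S.PosDef) (μ t : Fin k → ℝ) :
    ∫ x, exp (t ⬝ᵥ x) ∂multivariateGaussian μ S = exp (t ⬝ᵥ μ + t ⬝ᵥ (S *ᵥ t) / 2) := by
  simp_rw [integral_multivariateGaussian, smul_eq_mul, gaussianDensity_mul_exp_dotProduct hS]
  rw [integral_const_mul, integral_gaussianDensity hS, mul_one]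

theorem integral_mul_exp_neg_mul_multivariateGaussian {S : Matrix (Fin k) (Fin k) ℝ}
    (hS : S.PosDef) (a κ R : ℝ) (μ b v : Fin k → ℝ) :
    ∫ x, a * exp (-κ * (R + v ⬝ᵥ (x - b))) ∂multivariateGaussian μ S =
      a * exp (-(κ * R) - (μ - b) ⬝ᵥ (S⁻¹ *ᵥ (μ - b)) / 2 +
        (κ • v - S⁻¹ *ᵥ (μ - b)) ⬝ᵥ (S *ᵥ (κ • v - S⁻¹ *ᵥ (μ - b))) / 2) := by
  have hsplit : ∀ x, a * exp (-κ * (R + v ⬝ᵥ (x - b))) =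
      a * exp (-(κ * R) + κ * (v ⬝ᵥ b)) * exp ((-κ • v) ⬝ᵥ x) := by
    intro x
    rw [mul_assoc, ← exp_add, dotProduct_sub, smul_dotProduct, smul_eq_mul]
    ring_nf
  have hsq := (isHermitian_iff_isSymm.1 hS.isHermitian).dotProduct_mulVec_complete_square
    (isUnit_iff_ne_zero.2 hS.det_pos.ne') (κ • v) (μ - b)
  simp_rw [hsplit]
  rw [integral_const_mul, integral_exp_dotProduct_multivariateGaussian hS, mul_assoc, ← exp_add]
  congr 2
  simp only [smul_dotProduct, dotProduct_smul, mulVec_smul, sub_dotProduct, smul_eq_mul] at hsq ⊢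
  rw [dotProduct_comm b v, dotProduct_comm μ v] at hsq
  linarith

end Gaussian

/-- One-step exponential-utility optimization: the function
`v ↦ ∫ -A exp(-cW (R + ⟨v, x - r·𝟏⟩)) dN_k(μ,Σ)(x)` attains its supremum, uniquely at
`v* = (cW)⁻¹ Σ⁻¹ (μ - r·𝟏)`, with maximal value
`-A exp(-cWR - (1/2)(μ - r·𝟏)ᵀ Σ⁻¹ (μ - r·𝟏))`. -/
theorem one_step_exponential_utility_max {k : ℕ} (μ : Fin k → ℝ)
    (S : Matrix (Fin k) (Fin k) ℝ) (hS : S.PosDef)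
    (A c W R r : ℝ) (hA : 0 < A) (hc : 0 < c) (hW : 0 < W)
    (f : (Fin k → ℝ) → ℝ)
    (hf : ∀ v, f v = ∫ x, -A * Real.exp (-(c * W) * (R + v ⬝ᵥ (x - r • (1 : Fin k → ℝ))))
      ∂(multivariateGaussian μ S))
    (vstar : Fin k → ℝ)
    (hvstar : vstar = (c * W)⁻¹ • (S⁻¹ *ᵥ (μ - r • (1 : Fin k → ℝ)))) :
    (∀ v, f v ≤ f vstar) ∧ (∀ v, f v = f vstar → v = vstar) ∧
      f vstar = -A * Real.exp (-(c * W * R) -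
        (μ - r • (1 : Fin k → ℝ)) ⬝ᵥ (S⁻¹ *ᵥ (μ - r • (1 : Fin k → ℝ))) / 2) := by
  have hκ : 0 < c * W := mul_pos hc hW
  simp_rw [integral_mul_exp_neg_mul_multivariateGaussian hS] at hf
  have hstar : (c * W) • vstar - S⁻¹ *ᵥ (μ - r • 1) = 0 := by
    rw [hvstar, smul_smul, mul_inv_cancel₀ hκ.ne', one_smul, sub_self]
  have hlt : ∀ v, v ≠ vstar → f v < f vstar := by
    intro v hv
    have hw : (c * W) • v - S⁻¹ *ᵥ (μ - r • 1) ≠ 0 := by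
      rw [← sub_eq_zero.1 hstar, ← smul_sub]
      exact smul_ne_zero hκ.ne' (sub_ne_zero.2 hv)
    have hpos := hS.dotProduct_mulVec_pos hw
    rw [star_trivial] at hpos
    rw [hf, hf, hstar, mulVec_zero, dotProduct_zero, zero_div, add_zero]
    exact mul_lt_mul_of_neg_left (exp_lt_exp.2 (by linarith)) (neg_lt_zero.2 hA)
  refine ⟨fun v => ?_, fun v hv => not_imp_comm.1 (hlt v) hv.not_lt, ?_⟩
  · rcases eq_or_ne v vstar with rfl | hv
    exacts [le_rfl, (hlt v hv).le]
  · rw [hf, hstar, mulVec_zero, dotProduct_zero, zero_div, add_zero]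
end

section
/- Let k ≥ 1 be an integer, d > 0 a real number, and let B be a random variable with the Beta(k/2, d/2) distribution and u a random vector with the uniform distribution on the unit sphere S^{k−1} ⊂ ℝ^k, with B and u independent. Let S be a symmetric positive definite k×k real matrix with unique symmetric positive definite square root S^{1/2} (inverse S^{−1/2}), let m, b ∈ ℝ^k, and define ζ(B,u) = S^{−1} m + √(B(1−B)) S^{−1/2} u − B · S^{−1/2} u uᵀ S^{−1/2} m. Set c₁ = bᵀ S^{−1} b, c₂ = mᵀ S^{−1} m, c₁₂ = bᵀ S^{−1} m. Then E[ (bᵀ ζ(B,u))² ] = ( 1 − 2/(k+d) + 2/((k+d)(k+d+2)) ) c₁₂² + ( d/((k+d)(k+d+2)) + c₂/((k+d)(k+d+2)) ) c₁. -/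
open MeasureTheory Matrix

noncomputable def betaMeasure (a b : ℝ) : Measure ℝ :=
  volume.withDensity fun x =>
    ENNReal.ofReal (if x ∈ Set.Ioo (0 : ℝ) 1 then
      x ^ (a - 1) * (1 - x) ^ (b - 1) / (Real.Gamma a * Real.Gamma b / Real.Gamma (a + b))
    else 0)

/-!
Conditionally on `B`, the scalar `⟪b, ζ(B, u)⟫` equals
`c₁₂ + √(B(1-B)) ⟪S^{-1/2} b, u⟫ - B ⟪S^{-1/2} m, u⟫ ⟪S^{-1/2} b, u⟫`, a polynomial of degree two
in `u`. Invariance of the law of `u` under `-id` kills its odd moments, and invariance under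
reflections reduces the even ones to `E⟪e, u⟫² = 1/k` and `E⟪e, u⟫⁴ = 3/(k(k+2))` for a unit
vector `e`: the first because the squares along an orthonormal basis sum to `‖u‖² = 1`, the second
by polarization and the same sum. What is left is a quadratic polynomial in `B`, integrated with
`E B = a/(a+b)` and `E B² = a(a+1)/((a+b)(a+b+1))`; both follow from the identity
`x · pdf_{a,b}(x) = a/(a+b) · pdf_{a+1,b}(x)` between Beta densities.
-/

theorem Continuous.integrable_of_ae_mem_isCompact {X F : Type*} [TopologicalSpace X] [T2Space X]
    [MeasurableSpace X] [OpensMeasurableSpace X] [NormedAddCommGroup F] {μ : Measure X}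
    [IsFiniteMeasure μ] {K : Set X} (hK : IsCompact K) (hμ : ∀ᵐ x ∂μ, x ∈ K) {f : X → F}
    (hf : Continuous f) : Integrable f μ := by
  rw [← Measure.restrict_eq_self_of_ae_mem hμ]
  exact hf.continuousOn.integrableOn_compact hK

theorem MeasureTheory.Measure.ae_mem_prod {α β : Type*} [MeasurableSpace α] [MeasurableSpace β]
    {μ : Measure α} {ν : Measure β} [SFinite ν] {s : Set α} {t : Set β}
    (hs : ∀ᵐ x ∂μ, x ∈ s) (ht : ∀ᵐ y ∂ν, y ∈ t) : ∀ᵐ p ∂μ.prod ν, p ∈ s ×ˢ t :=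
  (Measure.quasiMeasurePreserving_fst.ae hs).and (Measure.quasiMeasurePreserving_snd.ae ht)

theorem betaMeasure_eq_probabilityTheory_betaMeasure (a b : ℝ) :
    betaMeasure a b = ProbabilityTheory.betaMeasure a b := by
  unfold betaMeasure ProbabilityTheory.betaMeasure
  congr with x
  simp only [ProbabilityTheory.betaPDF_eq, ProbabilityTheory.beta, Set.mem_Ioo]
  congr 1
  split_ifs <;> ring

-- Inside this namespace, `betaMeasure` is Mathlib's `ProbabilityTheory.betaMeasure`.
namespace ProbabilityTheory

theorem beta_add_one_left {a b : ℝ} (ha : 0 < a) (hb : 0 < b) :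
    beta (a + 1) b = a / (a + b) * beta a b := by
  have hab : a + b ≠ 0 := by positivity
  rw [beta, beta, add_right_comm, Real.Gamma_add_one ha.ne', Real.Gamma_add_one hab]
  field_simp

theorem betaPDFReal_nonneg {a b : ℝ} (ha : 0 < a) (hb : 0 < b) (x : ℝ) :
    0 ≤ betaPDFReal a b x := by
  by_cases hx : 0 < x ∧ x < 1
  · exact (betaPDFReal_pos hx.1 hx.2 ha hb).le
  · rw [betaPDFReal, if_neg hx]

theorem mul_betaPDFReal {a b : ℝ} (ha : 0 < a) (hb : 0 < b) (x : ℝ) :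
    x * betaPDFReal a b x = a / (a + b) * betaPDFReal (a + 1) b x := by
  unfold betaPDFReal
  split_ifs with hx
  · rw [beta_add_one_left ha hb, add_sub_cancel_right, Real.rpow_sub_one hx.1.ne']
    have hβ := (beta_pos ha hb).ne'
    have hx₀ := hx.1.ne'
    have hab : a + b ≠ 0 := by positivity
    field_simp
  · simp

theorem integral_betaMeasure_eq_integral_betaPDFReal_mul {a b : ℝ} (ha : 0 < a) (hb : 0 < b)
    (f : ℝ → ℝ) :
    ∫ x, f x ∂betaMeasure a b = ∫ x, betaPDFReal a b x * f x := by
  rw [betaMeasure, integral_withDensity_eq_integral_toReal_smul (f := betaPDF a b)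
    (measurable_betaPDFReal a b).ennreal_ofReal (ae_of_all _ fun _ => ENNReal.ofReal_lt_top)]
  simp only [betaPDF, ENNReal.toReal_ofReal (betaPDFReal_nonneg ha hb _), smul_eq_mul]

theorem integral_mul_betaMeasure {a b : ℝ} (ha : 0 < a) (hb : 0 < b) (f : ℝ → ℝ) :
    ∫ x, x * f x ∂betaMeasure a b = a / (a + b) * ∫ x, f x ∂betaMeasure (a + 1) b := by
  rw [integral_betaMeasure_eq_integral_betaPDFReal_mul ha hb,
    integral_betaMeasure_eq_integral_betaPDFReal_mul (by linarith) hb, ← integral_const_mul]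
  congr with x
  rw [← mul_assoc, mul_comm (betaPDFReal a b x), mul_betaPDFReal ha hb, mul_assoc]

theorem integral_id_betaMeasure {a b : ℝ} (ha : 0 < a) (hb : 0 < b) :
    ∫ x, x ∂betaMeasure a b = a / (a + b) := by
  have := isProbabilityMeasureBeta (by linarith : 0 < a + 1) hb
  simpa using integral_mul_betaMeasure ha hb fun _ => 1

theorem integral_sq_betaMeasure {a b : ℝ} (ha : 0 < a) (hb : 0 < b) :
    ∫ x, x ^ 2 ∂betaMeasure a b = a / (a + b) * ((a + 1) / (a + b + 1)) := by
  have h := integral_mul_betaMeasure ha hb fun x => x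
  simp only [← sq] at h
  rw [h, integral_id_betaMeasure (by linarith) hb, add_right_comm a 1 b]

theorem ae_mem_Icc_betaMeasure (a b : ℝ) : ∀ᵐ x ∂betaMeasure a b, x ∈ Set.Icc 0 1 := by
  rw [betaMeasure,
    ae_withDensity_iff (f := betaPDF a b) (measurable_betaPDFReal a b).ennreal_ofReal]
  refine ae_of_all _ fun x hx => ⟨?_, ?_⟩ <;> by_contra! h
  · exact hx (betaPDF_eq_zero_of_nonpos h.le)
  · exact hx (betaPDF_eq_zero_of_one_le h.le)

end ProbabilityTheory

section UnitSphere

open scoped RealInnerProductSpace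

variable {E : Type*} [NormedAddCommGroup E] [InnerProductSpace ℝ E] [MeasurableSpace E]
  [BorelSpace E] {ν : Measure E}

theorem integral_comp_linearIsometryEquiv (hinv : ∀ f : E ≃ₗᵢ[ℝ] E, ν.map f = ν)
    (f : E ≃ₗᵢ[ℝ] E) (g : E → ℝ) : ∫ u, g (f u) ∂ν = ∫ u, g u ∂ν :=
  (MeasurePreserving.mk f.continuous.measurable (hinv f)).integral_comp
    f.toHomeomorph.measurableEmbedding g

theorem integral_eq_zero_of_odd (hinv : ∀ f : E ≃ₗᵢ[ℝ] E, ν.map f = ν) {g : E → ℝ}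
    (hg : ∀ u, g (-u) = -g u) : ∫ u, g u ∂ν = 0 := by
  have h := integral_comp_linearIsometryEquiv hinv (LinearIsometryEquiv.neg ℝ) g
  simp only [LinearIsometryEquiv.coe_neg, hg, integral_neg] at h
  linarith

theorem integral_inner_pow_eq_of_norm_eq (hinv : ∀ f : E ≃ₗᵢ[ℝ] E, ν.map f = ν) {v w : E}
    (h : ‖v‖ = ‖w‖) (n : ℕ) : ∫ u, ⟪v, u⟫ ^ n ∂ν = ∫ u, ⟪w, u⟫ ^ n ∂ν := by
  set R := (ℝ ∙ (v - w))ᗮ.reflection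
  calc ∫ u, ⟪v, u⟫ ^ n ∂ν = ∫ u, ⟪R v, R u⟫ ^ n ∂ν := by
        simp only [LinearIsometryEquiv.inner_map_map]
    _ = ∫ u, ⟪R v, u⟫ ^ n ∂ν := integral_comp_linearIsometryEquiv hinv R fun u => ⟪R v, u⟫ ^ n
    _ = ∫ u, ⟪w, u⟫ ^ n ∂ν := by rw [Submodule.reflection_sub h]

theorem integral_inner_pow_eq_norm_pow_mul (hinv : ∀ f : E ≃ₗᵢ[ℝ] E, ν.map f = ν) {e : E}
    (he : ‖e‖ = 1) (v : E) (n : ℕ) :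
    ∫ u, ⟪v, u⟫ ^ n ∂ν = ‖v‖ ^ n * ∫ u, ⟪e, u⟫ ^ n ∂ν := by
  obtain ⟨w, hw, hvw⟩ : ∃ w : E, ‖w‖ = 1 ∧ ‖v‖ • w = v := by
    by_cases hv : v = 0
    · exact ⟨e, he, by simp [hv]⟩
    · exact ⟨‖v‖⁻¹ • v, by simp [norm_smul, hv], by simp [smul_smul, hv]⟩
  conv_lhs => rw [← hvw]
  simp_rw [real_inner_smul_left, mul_pow, integral_const_mul,
    integral_inner_pow_eq_of_norm_eq hinv (hw.trans he.symm)]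

variable [FiniteDimensional ℝ E] [IsProbabilityMeasure ν]

theorem integrable_of_ae_norm_eq_one (hν : ∀ᵐ u ∂ν, ‖u‖ = 1) {g : E → ℝ} (hg : Continuous g) :
    Integrable g ν :=
  hg.integrable_of_ae_mem_isCompact (isCompact_sphere 0 1) (by simpa using hν)

theorem integral_inner_sq_of_norm_eq_one (hν : ∀ᵐ u ∂ν, ‖u‖ = 1)
    (hinv : ∀ f : E ≃ₗᵢ[ℝ] E, ν.map f = ν) {e : E} (he : ‖e‖ = 1) :
    ∫ u, ⟪e, u⟫ ^ 2 ∂ν = 1 / Module.finrank ℝ E := by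
  set b := stdOrthonormalBasis ℝ E
  have hsum : ∑ i, ∫ u, ⟪b i, u⟫ ^ 2 ∂ν = 1 := by
    have h : ∀ᵐ u ∂ν, ∑ i, ⟪b i, u⟫ ^ 2 = 1 :=
      hν.mono fun u hu => by rw [b.sum_sq_inner_right, hu, one_pow]
    rw [← integral_finsetSum _ fun i _ => integrable_of_ae_norm_eq_one hν (by fun_prop),
      integral_congr_ae h, integral_const, probReal_univ, one_smul]
  simp_rw [integral_inner_pow_eq_of_norm_eq hinv ((b.orthonormal.1 _).trans he.symm),
    Finset.sum_const, Finset.card_univ, Fintype.card_fin, nsmul_eq_mul] at hsum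
  exact eq_one_div_of_mul_eq_one_right hsum

theorem integral_inner_sq (hν : ∀ᵐ u ∂ν, ‖u‖ = 1) (hinv : ∀ f : E ≃ₗᵢ[ℝ] E, ν.map f = ν)
    (v : E) : ∫ u, ⟪v, u⟫ ^ 2 ∂ν = ‖v‖ ^ 2 / Module.finrank ℝ E := by
  obtain ⟨e, he⟩ := hν.exists
  rw [integral_inner_pow_eq_norm_pow_mul hinv he, integral_inner_sq_of_norm_eq_one hν hinv he,
    mul_one_div]

theorem integral_inner_mul_inner (hν : ∀ᵐ u ∂ν, ‖u‖ = 1) (hinv : ∀ f : E ≃ₗᵢ[ℝ] E, ν.map f = ν)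
    (v w : E) : ∫ u, ⟪v, u⟫ * ⟪w, u⟫ ∂ν = ⟪v, w⟫ / Module.finrank ℝ E :=
  calc ∫ u, ⟪v, u⟫ * ⟪w, u⟫ ∂ν = ∫ u, (⟪v + w, u⟫ ^ 2 - ⟪v - w, u⟫ ^ 2) / 4 ∂ν := by
        congr with u
        rw [inner_add_left, inner_sub_left]
        ring
    _ = (∫ u, ⟪v + w, u⟫ ^ 2 ∂ν - ∫ u, ⟪v - w, u⟫ ^ 2 ∂ν) / 4 := by
        rw [integral_div, integral_sub (integrable_of_ae_norm_eq_one hν (by fun_prop))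
          (integrable_of_ae_norm_eq_one hν (by fun_prop))]
    _ = ⟪v, w⟫ / Module.finrank ℝ E := by
        rw [integral_inner_sq hν hinv, integral_inner_sq hν hinv, norm_add_sq_real,
          norm_sub_sq_real]
        ring

theorem integral_inner_sq_mul_inner_sq_eq_mul (hν : ∀ᵐ u ∂ν, ‖u‖ = 1)
    (hinv : ∀ f : E ≃ₗᵢ[ℝ] E, ν.map f = ν) {e : E} (he : ‖e‖ = 1) (v w : E) :
    ∫ u, ⟪v, u⟫ ^ 2 * ⟪w, u⟫ ^ 2 ∂ν
      = (‖v‖ ^ 2 * ‖w‖ ^ 2 + 2 * ⟪v, w⟫ ^ 2) / 3 * ∫ u, ⟪e, u⟫ ^ 4 ∂ν :=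
  calc ∫ u, ⟪v, u⟫ ^ 2 * ⟪w, u⟫ ^ 2 ∂ν
      = ∫ u, (⟪v + w, u⟫ ^ 4 + ⟪v - w, u⟫ ^ 4 - 2 * ⟪v, u⟫ ^ 4 - 2 * ⟪w, u⟫ ^ 4) / 12 ∂ν := by
        congr with u
        rw [inner_add_left, inner_sub_left]
        ring
    _ = (∫ u, ⟪v + w, u⟫ ^ 4 ∂ν + ∫ u, ⟪v - w, u⟫ ^ 4 ∂ν - 2 * ∫ u, ⟪v, u⟫ ^ 4 ∂ν
          - 2 * ∫ u, ⟪w, u⟫ ^ 4 ∂ν) / 12 := by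
        rw [integral_div, integral_sub, integral_sub, integral_add, integral_const_mul,
          integral_const_mul]
        all_goals exact integrable_of_ae_norm_eq_one hν (by fun_prop)
    _ = (‖v‖ ^ 2 * ‖w‖ ^ 2 + 2 * ⟪v, w⟫ ^ 2) / 3 * ∫ u, ⟪e, u⟫ ^ 4 ∂ν := by
        rw [integral_inner_pow_eq_norm_pow_mul hinv he (v + w),
          integral_inner_pow_eq_norm_pow_mul hinv he (v - w),
          integral_inner_pow_eq_norm_pow_mul hinv he v,
          integral_inner_pow_eq_norm_pow_mul hinv he w,
          show ‖v + w‖ ^ 4 = (‖v + w‖ ^ 2) ^ 2 by ring,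
          show ‖v - w‖ ^ 4 = (‖v - w‖ ^ 2) ^ 2 by ring, norm_add_sq_real, norm_sub_sq_real]
        ring

theorem integral_inner_pow_four_of_norm_eq_one (hν : ∀ᵐ u ∂ν, ‖u‖ = 1)
    (hinv : ∀ f : E ≃ₗᵢ[ℝ] E, ν.map f = ν) {e : E} (he : ‖e‖ = 1) :
    ∫ u, ⟪e, u⟫ ^ 4 ∂ν = 3 / (Module.finrank ℝ E * (Module.finrank ℝ E + 2)) := by
  set b := stdOrthonormalBasis ℝ E
  have h_sphere : ∑ i, ∫ u, ⟪e, u⟫ ^ 2 * ⟪b i, u⟫ ^ 2 ∂ν = 1 / Module.finrank ℝ E := by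
    have h : ∀ᵐ u ∂ν, ∑ i, ⟪e, u⟫ ^ 2 * ⟪b i, u⟫ ^ 2 = ⟪e, u⟫ ^ 2 :=
      hν.mono fun u hu => by rw [← Finset.mul_sum, b.sum_sq_inner_right, hu, one_pow, mul_one]
    rw [← integral_finsetSum _ fun i _ => integrable_of_ae_norm_eq_one hν (by fun_prop),
      integral_congr_ae h, integral_inner_sq_of_norm_eq_one hν hinv he]
  have h_polar : ∑ i, ∫ u, ⟪e, u⟫ ^ 2 * ⟪b i, u⟫ ^ 2 ∂ν
      = (Module.finrank ℝ E + 2) / 3 * ∫ u, ⟪e, u⟫ ^ 4 ∂ν :=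
    calc ∑ i, ∫ u, ⟪e, u⟫ ^ 2 * ⟪b i, u⟫ ^ 2 ∂ν
        = (∑ i, (1 + 2 * ⟪e, b i⟫ ^ 2)) / 3 * ∫ u, ⟪e, u⟫ ^ 4 ∂ν := by
          rw [Finset.sum_div, Finset.sum_mul]
          refine Finset.sum_congr rfl fun i _ => ?_
          rw [integral_inner_sq_mul_inner_sq_eq_mul hν hinv he, he, b.norm_eq_one]
          ring
      _ = (Module.finrank ℝ E + 2) / 3 * ∫ u, ⟪e, u⟫ ^ 4 ∂ν := by
          rw [Finset.sum_add_distrib, ← Finset.mul_sum, b.sum_sq_inner_left, he]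
          simp
  have : Nontrivial E := nontrivial_of_ne e 0 (by simp [← norm_ne_zero_iff, he])
  have hn : (0 : ℝ) < Module.finrank ℝ E := Nat.cast_pos.mpr Module.finrank_pos
  rw [h_polar] at h_sphere
  field_simp at h_sphere ⊢
  linarith

theorem integral_inner_sq_mul_inner_sq (hν : ∀ᵐ u ∂ν, ‖u‖ = 1)
    (hinv : ∀ f : E ≃ₗᵢ[ℝ] E, ν.map f = ν) (v w : E) :
    ∫ u, ⟪v, u⟫ ^ 2 * ⟪w, u⟫ ^ 2 ∂ν
      = (‖v‖ ^ 2 * ‖w‖ ^ 2 + 2 * ⟪v, w⟫ ^ 2)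
          / (Module.finrank ℝ E * (Module.finrank ℝ E + 2)) := by
  obtain ⟨e, he⟩ := hν.exists
  rw [integral_inner_sq_mul_inner_sq_eq_mul hν hinv he,
    integral_inner_pow_four_of_norm_eq_one hν hinv he]
  ring

theorem integral_sq_const_add_inner_sub_inner_mul_inner (hν : ∀ᵐ u ∂ν, ‖u‖ = 1)
    (hinv : ∀ f : E ≃ₗᵢ[ℝ] E, ν.map f = ν) (c α β : ℝ) (v w : E) :
    ∫ u, (c + α * ⟪v, u⟫ - β * (⟪w, u⟫ * ⟪v, u⟫)) ^ 2 ∂ν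
      = c ^ 2 + α ^ 2 * ‖v‖ ^ 2 / Module.finrank ℝ E
        + β ^ 2 * (‖w‖ ^ 2 * ‖v‖ ^ 2 + 2 * ⟪w, v⟫ ^ 2)
            / (Module.finrank ℝ E * (Module.finrank ℝ E + 2))
        - 2 * c * β * ⟪w, v⟫ / Module.finrank ℝ E := by
  have h_odd₁ : ∫ u, ⟪v, u⟫ ∂ν = 0 :=
    integral_eq_zero_of_odd hinv fun u => inner_neg_right v u
  have h_odd₃ : ∫ u, ⟪v, u⟫ ^ 2 * ⟪w, u⟫ ∂ν = 0 :=
    integral_eq_zero_of_odd hinv fun u => by simp only [inner_neg_right]; ring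
  calc ∫ u, (c + α * ⟪v, u⟫ - β * (⟪w, u⟫ * ⟪v, u⟫)) ^ 2 ∂ν
      = ∫ u, (c ^ 2 + α ^ 2 * ⟪v, u⟫ ^ 2 + β ^ 2 * (⟪w, u⟫ ^ 2 * ⟪v, u⟫ ^ 2)
          + 2 * c * α * ⟪v, u⟫ - 2 * c * β * (⟪w, u⟫ * ⟪v, u⟫)
          - 2 * α * β * (⟪v, u⟫ ^ 2 * ⟪w, u⟫)) ∂ν := by
        congr with u
        ring
    _ = c ^ 2 + α ^ 2 * ∫ u, ⟪v, u⟫ ^ 2 ∂ν + β ^ 2 * ∫ u, ⟪w, u⟫ ^ 2 * ⟪v, u⟫ ^ 2 ∂ν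
          + 2 * c * α * ∫ u, ⟪v, u⟫ ∂ν - 2 * c * β * ∫ u, ⟪w, u⟫ * ⟪v, u⟫ ∂ν
          - 2 * α * β * ∫ u, ⟪v, u⟫ ^ 2 * ⟪w, u⟫ ∂ν := by
        rw [integral_sub, integral_sub, integral_add, integral_add, integral_add, integral_const,
          probReal_univ, one_smul, integral_const_mul, integral_const_mul, integral_const_mul,
          integral_const_mul, integral_const_mul]
        all_goals exact integrable_of_ae_norm_eq_one hν (by fun_prop)
    _ = _ := by
        rw [h_odd₁, h_odd₃, integral_inner_sq hν hinv, integral_inner_sq_mul_inner_sq hν hinv,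
          integral_inner_mul_inner hν hinv]
        ring

theorem integral_sq_const_add_sqrt_mul_inner_sub_mul_inner_mul_inner_prod
    (hν : ∀ᵐ u ∂ν, ‖u‖ = 1) (hinv : ∀ f : E ≃ₗᵢ[ℝ] E, ν.map f = ν) {μ : Measure ℝ}
    [IsProbabilityMeasure μ] (hμ : ∀ᵐ x ∂μ, x ∈ Set.Icc 0 1) (c : ℝ) (v w : E) :
    ∫ p : ℝ × E, (c + √(p.1 * (1 - p.1)) * ⟪v, p.2⟫ - p.1 * (⟪w, p.2⟫ * ⟪v, p.2⟫)) ^ 2 ∂μ.prod ν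
      = c ^ 2 + ((∫ x, x ∂μ) - ∫ x, x ^ 2 ∂μ) * ‖v‖ ^ 2 / Module.finrank ℝ E
        + (∫ x, x ^ 2 ∂μ) * (‖w‖ ^ 2 * ‖v‖ ^ 2 + 2 * ⟪w, v⟫ ^ 2)
            / (Module.finrank ℝ E * (Module.finrank ℝ E + 2))
        - 2 * c * (∫ x, x ∂μ) * ⟪w, v⟫ / Module.finrank ℝ E := by
  set n : ℝ := (Module.finrank ℝ E : ℝ)
  have hint : ∀ f : ℝ → ℝ, Continuous f → Integrable f μ := fun f hf =>
    hf.integrable_of_ae_mem_isCompact isCompact_Icc hμ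
  have h_quadratic : ∀ p q r : ℝ, ∫ x, (p + q * x + r * x ^ 2) ∂μ
      = p + q * ∫ x, x ∂μ + r * ∫ x, x ^ 2 ∂μ := fun p q r => by
    rw [integral_add (hint _ (by fun_prop)) (hint _ (by fun_prop)),
      integral_add (hint _ (by fun_prop)) (hint _ (by fun_prop)), integral_const, probReal_univ,
      one_smul, integral_const_mul, integral_const_mul]
  rw [integral_prod _ ((by fun_prop : Continuous _).integrable_of_ae_mem_isCompact
    (isCompact_Icc.prod (isCompact_sphere 0 1)) (Measure.ae_mem_prod hμ (by simpa using hν)))]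
  simp_rw [integral_sq_const_add_inner_sub_inner_mul_inner hν hinv]
  rw [(integral_congr_ae ?_).trans (h_quadratic (c ^ 2) ((‖v‖ ^ 2 - 2 * c * ⟪w, v⟫) / n)
    ((‖w‖ ^ 2 * ‖v‖ ^ 2 + 2 * ⟪w, v⟫ ^ 2) / (n * (n + 2)) - ‖v‖ ^ 2 / n))]
  · ring
  · filter_upwards [hμ] with x hx
    rw [Real.sq_sqrt (mul_nonneg hx.1 (sub_nonneg.mpr hx.2))]
    ring

end UnitSphere

open scoped RealInnerProductSpace in
theorem inner_toEuclideanLin_inv_of_mul_self_eq {ι : Type*} [Fintype ι] [DecidableEq ι]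
    {R S : Matrix ι ι ℝ} (hR : R.IsHermitian) (hRS : R * R = S) (x y : EuclideanSpace ℝ ι) :
    ⟪x, toEuclideanLin S⁻¹ y⟫ = ⟪toEuclideanLin R⁻¹ x, toEuclideanLin R⁻¹ y⟫ := by
  have hmul : toEuclideanLin S⁻¹ y = toEuclideanLin R⁻¹ (toEuclideanLin R⁻¹ y) := by
    rw [← hRS, Matrix.mul_inv_rev, toLpLin_mul_same, LinearMap.comp_apply]
  rw [hmul, ← isSymmetric_toEuclideanLin_iff.mpr hR.inv]

open scoped RealInnerProductSpace in
theorem expectation_sq_dot_zeta_general {k : ℕ} (hk : 1 ≤ k) (d : ℝ) (hd : 0 < d)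
    (ν : Measure (EuclideanSpace ℝ (Fin k))) (hprob : IsProbabilityMeasure ν)
    (hsupp : ν {u : EuclideanSpace ℝ (Fin k) | ‖u‖ = 1}ᶜ = 0)
    (hinv : ∀ f : EuclideanSpace ℝ (Fin k) ≃ₗᵢ[ℝ] EuclideanSpace ℝ (Fin k), ν.map f = ν)
    (S Rt : Matrix (Fin k) (Fin k) ℝ)
    (hRt : Rt.PosDef) (hRtS : Rt * Rt = S)
    (m b : EuclideanSpace ℝ (Fin k))
    (ζ : ℝ → EuclideanSpace ℝ (Fin k) → EuclideanSpace ℝ (Fin k))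
    (hζ : ∀ B u, ζ B u = Matrix.toEuclideanLin S⁻¹ m
      + Real.sqrt (B * (1 - B)) • Matrix.toEuclideanLin Rt⁻¹ u
      - (B * (inner ℝ u (Matrix.toEuclideanLin Rt⁻¹ m) : ℝ)) • Matrix.toEuclideanLin Rt⁻¹ u)
    (c₁ c₂ c₁₂ : ℝ)
    (hc₁ : c₁ = (inner ℝ b (Matrix.toEuclideanLin S⁻¹ b) : ℝ))
    (hc₂ : c₂ = (inner ℝ m (Matrix.toEuclideanLin S⁻¹ m) : ℝ))
    (hc₁₂ : c₁₂ = (inner ℝ b (Matrix.toEuclideanLin S⁻¹ m) : ℝ)) :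
    ∫ p : ℝ × EuclideanSpace ℝ (Fin k), (inner ℝ b (ζ p.1 p.2) : ℝ) ^ 2
        ∂((betaMeasure ((k : ℝ) / 2) (d / 2)).prod ν) =
      (1 - 2 / ((k : ℝ) + d) + 2 / (((k : ℝ) + d) * ((k : ℝ) + d + 2))) * c₁₂ ^ 2
        + (d / (((k : ℝ) + d) * ((k : ℝ) + d + 2))
            + c₂ / (((k : ℝ) + d) * ((k : ℝ) + d + 2))) * c₁ := by
  have hk₀ : (0 : ℝ) < k := by exact_mod_cast hk
  have ha : 0 < (k : ℝ) / 2 := by positivity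
  have hb : 0 < d / 2 := by positivity
  have := ProbabilityTheory.isProbabilityMeasureBeta ha hb
  have hν : ∀ᵐ u ∂ν, ‖u‖ = 1 := hsupp
  set A := toEuclideanLin Rt⁻¹
  have hS : ∀ x y, ⟪x, toEuclideanLin S⁻¹ y⟫ = ⟪A x, A y⟫ :=
    inner_toEuclideanLin_inv_of_mul_self_eq hRt.1 hRtS
  have hc₁' : ‖A b‖ ^ 2 = c₁ := by rw [hc₁, hS, real_inner_self_eq_norm_sq]
  have hc₂' : ‖A m‖ ^ 2 = c₂ := by rw [hc₂, hS, real_inner_self_eq_norm_sq]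
  have hc₁₂' : ⟪A m, A b⟫ = c₁₂ := by rw [hc₁₂, hS, real_inner_comm]
  have hζ' : ∀ B u,
      ⟪b, ζ B u⟫ = c₁₂ + √(B * (1 - B)) * ⟪A b, u⟫ - B * (⟪A m, u⟫ * ⟪A b, u⟫) := by
    intro B u
    rw [hζ, inner_sub_right, inner_add_right, real_inner_smul_right, real_inner_smul_right,
      ← hc₁₂, ← isSymmetric_toEuclideanLin_iff.mpr hRt.1.inv b u, real_inner_comm (A m) u]
    ring
  simp_rw [hζ', betaMeasure_eq_probabilityTheory_betaMeasure,
    integral_sq_const_add_sqrt_mul_inner_sub_mul_inner_mul_inner_prod hν hinv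
      (ProbabilityTheory.ae_mem_Icc_betaMeasure _ _),
    ProbabilityTheory.integral_id_betaMeasure ha hb,
    ProbabilityTheory.integral_sq_betaMeasure ha hb,
    finrank_euclideanSpace_fin, hc₁', hc₂', hc₁₂']
  field_simp
  ring

/-- Let `B ~ Beta(k/2, d/2)` and let `u` be uniform on the unit sphere of
`ℝ^k` (law `ν`: the normalized rotation-invariant probability measure carried by the unit
sphere), independent of `B` (so that the pair `(B, u)` has the product law). With `S`
symmetric positive definite, `Rt` its unique symmetric positive definite square root
(`Rt * Rt = S`, `S^{-1/2} = Rt⁻¹`),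
`ζ(B,u) = S⁻¹ m + √(B(1−B)) S^{-1/2} u − B·S^{-1/2} u uᵀ S^{-1/2} m`,
`c₁ = bᵀ S⁻¹ b`, `c₂ = mᵀ S⁻¹ m`, `c₁₂ = bᵀ S⁻¹ m`, one has
`E[(bᵀ ζ(B,u))²] = (1 − 2/(k+d) + 2/((k+d)(k+d+2))) c₁₂²
  + (d/((k+d)(k+d+2)) + c₂/((k+d)(k+d+2))) c₁`. -/
theorem expectation_sq_dot_zeta {k : ℕ} (hk : 1 ≤ k) (d : ℝ) (hd : 0 < d)
    (ν : Measure (EuclideanSpace ℝ (Fin k))) (hprob : IsProbabilityMeasure ν)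
    (hsupp : ν {u : EuclideanSpace ℝ (Fin k) | ‖u‖ = 1}ᶜ = 0)
    (hinv : ∀ f : EuclideanSpace ℝ (Fin k) ≃ₗᵢ[ℝ] EuclideanSpace ℝ (Fin k), ν.map f = ν)
    (S Rt : Matrix (Fin k) (Fin k) ℝ)
    (hS : S.PosDef) (hRt : Rt.PosDef) (hRtS : Rt * Rt = S)
    (m b : EuclideanSpace ℝ (Fin k))
    (ζ : ℝ → EuclideanSpace ℝ (Fin k) → EuclideanSpace ℝ (Fin k))
    (hζ : ∀ B u, ζ B u = Matrix.toEuclideanLin S⁻¹ m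
      + Real.sqrt (B * (1 - B)) • Matrix.toEuclideanLin Rt⁻¹ u
      - (B * (inner ℝ u (Matrix.toEuclideanLin Rt⁻¹ m) : ℝ)) • Matrix.toEuclideanLin Rt⁻¹ u)
    (c₁ c₂ c₁₂ : ℝ)
    (hc₁ : c₁ = (inner ℝ b (Matrix.toEuclideanLin S⁻¹ b) : ℝ))
    (hc₂ : c₂ = (inner ℝ m (Matrix.toEuclideanLin S⁻¹ m) : ℝ))
    (hc₁₂ : c₁₂ = (inner ℝ b (Matrix.toEuclideanLin S⁻¹ m) : ℝ)) :
    ∫ p : ℝ × EuclideanSpace ℝ (Fin k), (inner ℝ b (ζ p.1 p.2) : ℝ) ^ 2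
        ∂((betaMeasure ((k : ℝ) / 2) (d / 2)).prod ν) =
      (1 - 2 / ((k : ℝ) + d) + 2 / (((k : ℝ) + d) * ((k : ℝ) + d + 2))) * c₁₂ ^ 2
        + (d / (((k : ℝ) + d) * ((k : ℝ) + d + 2))
            + c₂ / (((k : ℝ) + d) * ((k : ℝ) + d + 2))) * c₁ :=
  expectation_sq_dot_zeta_general hk d hd ν hprob hsupp hinv S Rt hRt hRtS m b ζ hζ c₁ c₂ c₁₂ hc₁
    hc₂ hc₁₂
end
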